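/- Let G = (V, E) be a finite digraph, s, t ∈ V with s ≠ t, let G′ be the split digraph of G with respect to s and t, let P be a set of k pairwise internally node-disjoint directed paths from s to t in G, and let P′ be the corresponding set of k pairwise edge-disjoint s–t paths in G′ (replacing each internal vertex v of a path by the arc (v_1, v_2)). If the residual digraph of G′ with respect to P′ contains a directed path from s to t, then there exists a set of k + 1 pairwise internally node-disjoint directed paths from s to t in G. -/

import Mathlib

/-!
The paths of `P′` form a unit flow in the split digraph `G′`. Cancelling the flow-arcs that the
augmenting path traverses backwards and adding those it traverses forwards keeps in-degree equal to
out-degree at every node other than `s` and `t`, and gives `s` one more outgoing arc. In `G′` every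
internal node has in-degree or out-degree one, so the new arc set still carries at most one unit
through each node and splits greedily into `k + 1` internally node-disjoint `s`–`t` paths. These
are split paths; contracting them gives the required paths in `G`.
-/

/-- The list of arcs traversed by a path given as a list of vertices. -/
def pathArcs {V : Type*} (p : List V) : List (V × V) := p.zip p.tail

/-- `p` is a directed path from `s` to `t` in the digraph with arc set `E`:
a nonempty list of pairwise distinct vertices, starting at `s`, ending at `t`,
with consecutive vertices joined by arcs of `E`. -/
def IsPath {V : Type*} (E : Finset (V × V)) (s t : V) (p : List V) : Prop :=
  p.Nodup ∧ p.Chain' (fun u v => (u, v) ∈ E) ∧ p.head? = some s ∧ p.getLast? = some t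

/-- Two paths are edge-disjoint if they share no arc. -/
def EdgeDisjoint {V : Type*} (p q : List V) : Prop :=
  ∀ a : V × V, a ∈ pathArcs p → a ∉ pathArcs q

/-- Two `s`–`t` paths are internally node-disjoint if the only vertices they share
are `s` and `t`. -/
def IntDisjoint {V : Type*} (s t : V) (p q : List V) : Prop :=
  ∀ v : V, v ∈ p → v ∈ q → v = s ∨ v = t

/-- `P` is a set of pairwise edge-disjoint directed paths from `s` to `t`. -/
def IsEdgeDisjointFamily {V : Type*} (E : Finset (V × V)) (s t : V)
    (P : Finset (List V)) : Prop :=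
  (∀ p ∈ P, IsPath E s t p) ∧ (P : Set (List V)).Pairwise EdgeDisjoint

/-- `P` is a set of pairwise internally node-disjoint directed paths from `s` to `t`. -/
def IsNodeDisjointFamily {V : Type*} (E : Finset (V × V)) (s t : V)
    (P : Finset (List V)) : Prop :=
  (∀ p ∈ P, IsPath E s t p) ∧ (P : Set (List V)).Pairwise (IntDisjoint s t)

/-- The flow-arcs: arcs used by some path of `P`. -/
def flowArcs {V : Type*} [DecidableEq V] (P : Finset (List V)) : Finset (V × V) :=
  P.biUnion (fun p => (pathArcs p).toFinset)

/-- The arc set of the residualArcs digraph of `E` with respect to the path set `P`: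
all arcs of `E` that are not flow-arcs, together with the reversals of all flow-arcs. -/
def residualArcs {V : Type*} [DecidableEq V] (E : Finset (V × V)) (P : Finset (List V)) :
    Finset (V × V) :=
  (E \ flowArcs P) ∪ (flowArcs P).image (fun a => (a.2, a.1))

/-- In the split digraph, the exit node of `v`: internal nodes `v` have exit node
`(v, true)`, while `s` and `t` are their own entry and exit node (represented by
`(s, false)` and `(t, false)`). -/
def exitNode {V : Type*} [DecidableEq V] (s t v : V) : V × Bool :=
  if v = s ∨ v = t then (v, false) else (v, true)

/-- The arc set of the split digraph of `E` with respect to `s` and `t`: every internal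
node `v` is replaced by an entry node `(v, false)` and an exit node `(v, true)` joined by
an arc, and every arc `(u, v)` of `E` becomes an arc from the exit node of `u` to the
entry node of `v`; `s` and `t` are not split (their entry and exit node is `(s, false)`,
resp. `(t, false)`). -/
def splitArcs {V : Type*} [Fintype V] [DecidableEq V] (E : Finset (V × V)) (s t : V) :
    Finset ((V × Bool) × (V × Bool)) :=
  ((Finset.univ : Finset V).filter (fun v => v ≠ s ∧ v ≠ t)).image
      (fun v => ((v, false), (v, true)))
    ∪ E.image (fun a => (exitNode s t a.1, (a.2, false)))

/-- The path of the split digraph corresponding to a path `p` of `G`: each internal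
vertex `v` is replaced by its entry node followed by its exit node (i.e. by the arc
`(v₁, v₂)`), while `s` and `t` are kept as single nodes. -/
def splitPath {V : Type*} [DecidableEq V] (s t : V) (p : List V) : List (V × Bool) :=
  p.flatMap (fun v => if v = s ∨ v = t then [(v, false)] else [(v, false), (v, true)])
section ArcSets

variable {W : Type*} [DecidableEq W]

def inArcs (X : Finset (W × W)) (w : W) : Finset (W × W) := X.filter (·.2 = w)

def outArcs (X : Finset (W × W)) (w : W) : Finset (W × W) := X.filter (·.1 = w)

def netOutflow (X : Finset (W × W)) (w : W) : ℤ := (outArcs X w).card - (inArcs X w).card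

variable {X Y : Finset (W × W)} {w : W}

@[simp] lemma mem_inArcs {e : W × W} : e ∈ inArcs X w ↔ e ∈ X ∧ e.2 = w := Finset.mem_filter

@[simp] lemma mem_outArcs {e : W × W} : e ∈ outArcs X w ↔ e ∈ X ∧ e.1 = w := Finset.mem_filter

lemma inArcs_mono (h : X ⊆ Y) : inArcs X w ⊆ inArcs Y w := Finset.filter_subset_filter _ h

lemma outArcs_mono (h : X ⊆ Y) : outArcs X w ⊆ outArcs Y w := Finset.filter_subset_filter _ h

lemma netOutflow_union_of_disjoint (h : Disjoint X Y) (w : W) :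
    netOutflow (X ∪ Y) w = netOutflow X w + netOutflow Y w := by
  have hcard (Z : W × W → Prop) [DecidablePred Z] :
      ((X ∪ Y).filter Z).card = (X.filter Z).card + (Y.filter Z).card := by
    rw [Finset.filter_union, Finset.card_union_of_disjoint (Finset.disjoint_filter_filter h)]
  simp only [netOutflow, outArcs, inArcs, hcard]
  push_cast
  ring

lemma netOutflow_sdiff_add_inter (X Y : Finset (W × W)) (w : W) :
    netOutflow (X \ Y) w + netOutflow (X ∩ Y) w = netOutflow X w := by
  rw [← netOutflow_union_of_disjoint (Finset.disjoint_sdiff_inter X Y), Finset.sdiff_union_inter]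

lemma netOutflow_image_swap (X : Finset (W × W)) (w : W) :
    netOutflow (X.image Prod.swap) w = -netOutflow X w := by
  have hout : outArcs (X.image Prod.swap) w = (inArcs X w).image Prod.swap := by
    ext ⟨a, b⟩; simp [and_comm]
  have hin : inArcs (X.image Prod.swap) w = (outArcs X w).image Prod.swap := by
    ext ⟨a, b⟩; simp [and_comm]
  simp only [netOutflow, hout, hin, Finset.card_image_of_injective _ Prod.swap_injective]
  ring

lemma netOutflow_biUnion {ι : Type*} {Q : Finset ι} {f : ι → Finset (W × W)}
    (hf : (Q : Set ι).PairwiseDisjoint f) (w : W) :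
    netOutflow (Q.biUnion f) w = ∑ i ∈ Q, netOutflow (f i) w := by
  have hcard (Z : W × W → Prop) [DecidablePred Z] :
      ((Q.biUnion f).filter Z).card = ∑ i ∈ Q, ((f i).filter Z).card := by
    rw [Finset.filter_biUnion, Finset.card_biUnion]
    exact hf.mono fun i => Finset.filter_subset _ _
  simp only [netOutflow, outArcs, inArcs, hcard, Finset.sum_sub_distrib]
  push_cast
  rfl

lemma netOutflow_augment {F A : Finset (W × W)}
    (h : Disjoint (F \ A.image Prod.swap) (A \ F.image Prod.swap)) (w : W) :
    netOutflow ((F \ A.image Prod.swap) ∪ (A \ F.image Prod.swap)) w =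
      netOutflow F w + netOutflow A w := by
  have hswap : A ∩ F.image Prod.swap = (F ∩ A.image Prod.swap).image Prod.swap := by
    ext ⟨a, b⟩; simp [and_comm]
  have hF := netOutflow_sdiff_add_inter F (A.image Prod.swap) w
  have hA := netOutflow_sdiff_add_inter A (F.image Prod.swap) w
  rw [hswap, netOutflow_image_swap] at hA
  rw [netOutflow_union_of_disjoint h]
  linarith

end ArcSets

section Paths

variable {W : Type*}

lemma map_snd_pathArcs (p : List W) : (pathArcs p).map Prod.snd = p.tail :=
  List.map_snd_zip (by simp)

lemma map_fst_pathArcs : ∀ p : List W, (pathArcs p).map Prod.fst = p.dropLast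
  | [] => rfl
  | [_] => rfl
  | a :: b :: l => by
    have ih := map_fst_pathArcs (b :: l)
    simp only [pathArcs, List.tail_cons, List.zip_cons_cons, List.map_cons] at ih ⊢
    rw [ih, List.dropLast_cons_cons]

lemma fst_mem_of_mem_pathArcs {p : List W} {e : W × W} (he : e ∈ pathArcs p) :
    e.1 ∈ p.dropLast := by
  rw [← map_fst_pathArcs]; exact List.mem_map_of_mem he

lemma snd_mem_of_mem_pathArcs {p : List W} {e : W × W} (he : e ∈ pathArcs p) : e.2 ∈ p.tail := by
  rw [← map_snd_pathArcs]; exact List.mem_map_of_mem he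

lemma nodup_pathArcs {p : List W} (hp : p.Nodup) : (pathArcs p).Nodup :=
  List.Nodup.of_map Prod.snd (by rw [map_snd_pathArcs]; exact hp.sublist (List.tail_sublist p))

variable {X : Finset (W × W)} {s t w x y : W} {p q : List W}

lemma IsPath.nodup (hp : IsPath X s t p) : p.Nodup := hp.1

lemma IsPath.mem_tail_iff (hp : IsPath X s t p) : w ∈ p.tail ↔ w ∈ p ∧ w ≠ s := by
  obtain ⟨r, rfl⟩ := List.head?_eq_some_iff.mp hp.2.2.1
  have hs : s ∉ r := (List.nodup_cons.mp hp.1).1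
  simp only [List.tail_cons, List.mem_cons]
  exact ⟨fun h => ⟨Or.inr h, by rintro rfl; exact hs h⟩, fun ⟨h, hw⟩ => h.resolve_left hw⟩

lemma IsPath.mem_dropLast_iff (hp : IsPath X s t p) : w ∈ p.dropLast ↔ w ∈ p ∧ w ≠ t := by
  obtain ⟨r, rfl⟩ := List.getLast?_eq_some_iff.mp hp.2.2.2
  have ht : t ∉ r := fun h => (List.nodup_append.mp hp.1).2.2 t h t (List.mem_singleton_self t) rfl
  simp only [List.dropLast_concat, List.mem_append, List.mem_singleton]
  exact ⟨fun h => ⟨Or.inl h, by rintro rfl; exact ht h⟩, fun ⟨h, hw⟩ => h.resolve_right hw⟩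

lemma IsPath.start_mem (hp : IsPath X s t p) : s ∈ p := List.mem_of_mem_head? hp.2.2.1

lemma IsPath.end_mem (hp : IsPath X s t p) : t ∈ p := List.mem_of_mem_getLast? hp.2.2.2

lemma rel_of_mem_pathArcs {R : W → W → Prop} :
    ∀ {p : List W}, p.IsChain R → ∀ {e : W × W}, e ∈ pathArcs p → R e.1 e.2
  | a :: b :: l, hp, e, he => by
    rw [List.isChain_cons_cons] at hp
    rcases List.mem_cons.mp he with rfl | he
    · exact hp.1
    · exact rel_of_mem_pathArcs hp.2 he

lemma IsPath.mem_of_mem_pathArcs (hp : IsPath X s t p) {e : W × W} (he : e ∈ pathArcs p) :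
    e ∈ X :=
  rel_of_mem_pathArcs (R := fun u v => (u, v) ∈ X) hp.2.1 he

lemma IsPath.exists_mem_pathArcs_snd (hp : IsPath X s t p) (hw : w ∈ p) (hws : w ≠ s) :
    ∃ u, (u, w) ∈ pathArcs p := by
  have : w ∈ (pathArcs p).map Prod.snd := by rw [map_snd_pathArcs, hp.mem_tail_iff]; exact ⟨hw, hws⟩
  obtain ⟨⟨u, w'⟩, he, rfl⟩ := List.mem_map.mp this
  exact ⟨u, he⟩

lemma IsPath.concat (hq : IsPath X s x q) (hxy : (x, y) ∈ X) (hy : y ∉ q) :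
    IsPath X s y (q ++ [y]) := by
  obtain ⟨hnd, hch, hhd, hlast⟩ := hq
  have hne : q ≠ [] := by rintro rfl; simp at hhd
  refine ⟨List.nodup_append.mpr ⟨hnd, List.nodup_singleton y, ?_⟩, ?_, ?_, List.getLast?_concat⟩
  · simp only [List.mem_singleton]; rintro a ha _ rfl rfl; exact hy ha
  · refine List.isChain_append.mpr ⟨hch, List.isChain_singleton y, ?_⟩
    simp [hlast, hxy]
  · rw [List.head?_append_of_ne_nil _ hne, hhd]

lemma IsPath.eq_pair_of_mem_pathArcs (hp : IsPath X s t p) (h : (s, t) ∈ pathArcs p) :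
    p = [s, t] := by
  obtain ⟨_ | ⟨b, l⟩, rfl⟩ := List.head?_eq_some_iff.mp hp.2.2.1
  · simp [pathArcs] at h
  have hs : s ∉ b :: l := (List.nodup_cons.mp hp.1).1
  rcases List.mem_cons.mp h with hb | h
  · obtain rfl : t = b := (Prod.mk.inj hb).2
    cases l with
    | nil => rfl
    | cons c l =>
      have : t ∈ (s :: t :: c :: l).dropLast := by simp
      exact absurd rfl (hp.mem_dropLast_iff.mp this).2
  · exact absurd (List.dropLast_subset _ (fst_mem_of_mem_pathArcs h)) hs

lemma IsPath.mono {Y : Finset (W × W)} (hXY : X ⊆ Y) (hp : IsPath X s t p) : IsPath Y s t p :=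
  ⟨hp.1, hp.2.1.imp fun _ _ h => hXY h, hp.2.2⟩

lemma IntDisjoint.symm (h : IntDisjoint s t p q) : IntDisjoint s t q p :=
  fun v hq hp => h v hp hq

lemma IsNodeDisjointFamily.mono {Y : Finset (W × W)} {Q : Finset (List W)} (hXY : X ⊆ Y)
    (hQ : IsNodeDisjointFamily X s t Q) : IsNodeDisjointFamily Y s t Q :=
  ⟨fun p hp => (hQ.1 p hp).mono hXY, hQ.2⟩

end Paths

section PathFlows

variable {W : Type*} [DecidableEq W] {X F : Finset (W × W)} {s t w x : W} {p q : List W}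

lemma card_filter_toFinset_eq_count_map {α β : Type*} [DecidableEq α] [DecidableEq β]
    {l : List α} (hl : l.Nodup) (f : α → β) (b : β) :
    (l.toFinset.filter (f · = b)).card = (l.map f).count b := by
  have : l.toFinset.filter (f · = b) = (l.filter (fun a => f a == b)).toFinset := by
    simp [List.toFinset_filter]
  rw [this, List.toFinset_card_of_nodup (hl.filter _), ← List.countP_eq_length_filter, List.count,
    List.countP_map]
  rfl

lemma card_inArcs_pathArcs (hp : p.Nodup) (w : W) :
    (inArcs (pathArcs p).toFinset w).card = p.tail.count w := by
  rw [inArcs, card_filter_toFinset_eq_count_map (nodup_pathArcs hp), map_snd_pathArcs]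

lemma card_outArcs_pathArcs (hp : p.Nodup) (w : W) :
    (outArcs (pathArcs p).toFinset w).card = p.dropLast.count w := by
  rw [outArcs, card_filter_toFinset_eq_count_map (nodup_pathArcs hp), map_fst_pathArcs]

lemma IsPath.card_inArcs (hp : IsPath X s t p) (w : W) :
    (inArcs (pathArcs p).toFinset w).card = if w ∈ p ∧ w ≠ s then 1 else 0 := by
  rw [card_inArcs_pathArcs hp.nodup, (hp.nodup.sublist (List.tail_sublist p)).count]
  simp only [hp.mem_tail_iff]

lemma IsPath.card_outArcs (hp : IsPath X s t p) (w : W) :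
    (outArcs (pathArcs p).toFinset w).card = if w ∈ p ∧ w ≠ t then 1 else 0 := by
  rw [card_outArcs_pathArcs hp.nodup, (hp.nodup.sublist (List.dropLast_sublist p)).count]
  simp only [hp.mem_dropLast_iff]

lemma IsPath.length_le (hp : IsPath X s t p) : p.length ≤ X.card + 1 := by
  have hsub : (pathArcs p).toFinset ⊆ X := fun e he =>
    hp.mem_of_mem_pathArcs (List.mem_toFinset.mp he)
  have := Finset.card_le_card hsub
  rw [List.toFinset_card_of_nodup (nodup_pathArcs hp.nodup), pathArcs, List.length_zip,
    List.length_tail] at this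
  omega

def IsUnitFlow (F : Finset (W × W)) (s t : W) : Prop :=
  inArcs F s = ∅ ∧ ∀ w, w ≠ s → w ≠ t → netOutflow F w = 0 ∧ (inArcs F w).card ≤ 1

lemma IsPath.isUnitFlow (hp : IsPath X s t p) : IsUnitFlow (pathArcs p).toFinset s t := by
  refine ⟨Finset.card_eq_zero.mp (by simp [hp.card_inArcs]), fun w hws hwt => ?_⟩
  simp only [netOutflow, hp.card_inArcs, hp.card_outArcs, hws, hwt, ne_eq, not_false_eq_true,
    and_true]
  split_ifs <;> simp

lemma IsPath.netOutflow_start (hp : IsPath X s t p) (hst : s ≠ t) :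
    netOutflow (pathArcs p).toFinset s = 1 := by
  simp [netOutflow, hp.card_inArcs, hp.card_outArcs, hp.start_mem, hst]

end PathFlows

section UnitFlows

variable {W : Type*} [DecidableEq W] {F : Finset (W × W)} {s t : W} {p : List W}
  {Q : Finset (List W)}

lemma IsUnitFlow.exists_isPath_of_isPath (hF : IsUnitFlow F s t) {x : W} {q : List W}
    (hq : IsPath F s x q) (hx : (outArcs F x).Nonempty) (ht : t ∉ q) : ∃ p, IsPath F s t p := by
  obtain ⟨⟨x', y⟩, hx⟩ := hx
  obtain ⟨hxy, hx' : x' = x⟩ := mem_outArcs.mp hx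
  rw [hx'] at hxy
  by_cases hyt : y = t
  · subst hyt
    exact ⟨_, hq.concat hxy ht⟩
  have hys : y ≠ s := by
    rintro rfl
    simpa [hF.1] using (mem_inArcs (X := F)).mpr ⟨hxy, rfl⟩
  -- a second visit to `y` would give `y` two incoming arcs
  have hyq : y ∉ q := by
    intro hyq
    obtain ⟨u, hu⟩ := hq.exists_mem_pathArcs_snd hyq hys
    have hux : u ≠ x := by
      rintro rfl
      exact (hq.mem_dropLast_iff.mp (fst_mem_of_mem_pathArcs hu)).2 rfl
    have := Finset.card_le_one.mp (hF.2 y hys hyt).2 (u, y)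
      (by simp [hq.mem_of_mem_pathArcs hu]) (x, y) (by simp [hxy])
    exact hux (Prod.mk.inj this).1
  have hy : (outArcs F y).Nonempty := by
    have hin : 0 < (inArcs F y).card := Finset.card_pos.mpr ⟨(x, y), by simp [hxy]⟩
    have hnet := (hF.2 y hys hyt).1
    rw [netOutflow] at hnet
    exact Finset.card_pos.mp (by omega)
  have hq' := hq.concat hxy hyq
  exact IsUnitFlow.exists_isPath_of_isPath hF hq' hy (by simp [ht, Ne.symm hyt])
termination_by F.card + 1 - q.length
decreasing_by
  have := hq'.length_le
  simp only [List.length_append, List.length_singleton] at this ⊢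
  omega

lemma IsUnitFlow.exists_isPath (hF : IsUnitFlow F s t) (hst : s ≠ t)
    (hs : (outArcs F s).Nonempty) : ∃ p, IsPath F s t p :=
  hF.exists_isPath_of_isPath (q := [s])
    ⟨List.nodup_singleton s, List.isChain_singleton s, rfl, rfl⟩ hs (by simpa using hst.symm)

lemma IsUnitFlow.sdiff_pathArcs (hF : IsUnitFlow F s t) (hp : IsPath F s t p) (hst : s ≠ t) :
    IsUnitFlow (F \ (pathArcs p).toFinset) s t ∧
      netOutflow (F \ (pathArcs p).toFinset) s = netOutflow F s - 1 := by
  have hsub : (pathArcs p).toFinset ⊆ F := fun e he =>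
    hp.mem_of_mem_pathArcs (List.mem_toFinset.mp he)
  have hnet (w : W) : netOutflow (F \ (pathArcs p).toFinset) w =
      netOutflow F w - netOutflow (pathArcs p).toFinset w := by
    rw [← netOutflow_sdiff_add_inter F (pathArcs p).toFinset w, Finset.inter_eq_right.mpr hsub]
    ring
  have hin (w : W) :=
    inArcs_mono (w := w) (Finset.sdiff_subset (s := F) (t := (pathArcs p).toFinset))
  refine ⟨⟨Finset.subset_empty.mp (hF.1 ▸ hin s), fun w hws hwt => ⟨?_, ?_⟩⟩, ?_⟩
  · rw [hnet, (hF.2 w hws hwt).1, (hp.isUnitFlow.2 w hws hwt).1, sub_zero]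
  · exact (Finset.card_le_card (hin w)).trans (hF.2 w hws hwt).2
  · rw [hnet, hp.netOutflow_start hst]

theorem IsUnitFlow.exists_isNodeDisjointFamily (hst : s ≠ t) :
    ∀ (n : ℕ) {F : Finset (W × W)}, IsUnitFlow F s t → netOutflow F s = n →
      ∃ Q : Finset (List W), Q.card = n ∧ IsNodeDisjointFamily F s t Q
  | 0, _, _, _ => ⟨∅, rfl, by simp [IsNodeDisjointFamily]⟩
  | n + 1, F, hF, hn => by
    have hs : (outArcs F s).Nonempty := by
      rw [netOutflow, hF.1, Finset.card_empty] at hn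
      exact Finset.card_pos.mp (by omega)
    obtain ⟨p, hp⟩ := hF.exists_isPath hst hs
    obtain ⟨hF', hn'⟩ := hF.sdiff_pathArcs hp hst
    obtain ⟨Q, hQcard, hQ⟩ :=
      IsUnitFlow.exists_isNodeDisjointFamily hst n hF' (by rw [hn', hn]; push_cast; ring)
    have hoff {q : List W} (hq : q ∈ Q) {e : W × W} (he : e ∈ pathArcs q) :
        e ∈ F ∧ e ∉ pathArcs p := by
      simpa using (hQ.1 q hq).mem_of_mem_pathArcs he
    -- a common internal node would receive two arcs of `F`, one on `p` and one off it
    have hdisj {q : List W} (hq : q ∈ Q) : IntDisjoint s t p q := by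
      intro v hvp hvq
      by_contra! hv
      obtain ⟨u₁, hu₁⟩ := hp.exists_mem_pathArcs_snd hvp hv.1
      obtain ⟨u₂, hu₂⟩ := (hQ.1 q hq).exists_mem_pathArcs_snd hvq hv.1
      have := Finset.card_le_one.mp (hF.2 v hv.1 hv.2).2 (u₁, v)
        (by simp [hp.mem_of_mem_pathArcs hu₁]) (u₂, v) (by simp [(hoff hq hu₂).1])
      exact (hoff hq hu₂).2 (this ▸ hu₁)
    have hpQ : p ∉ Q := by
      intro hpQ
      obtain ⟨u, hu⟩ := hp.exists_mem_pathArcs_snd hp.end_mem hst.symm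
      exact (hoff hpQ hu).2 hu
    refine ⟨insert p Q, by rw [Finset.card_insert_of_notMem hpQ, hQcard], ?_, ?_⟩
    · intro q hq
      rcases Finset.mem_insert.mp hq with rfl | hq
      · exact hp
      · exact (hQ.1 q hq).mono Finset.sdiff_subset
    · rw [Finset.coe_insert, Set.pairwise_insert]
      exact ⟨hQ.2, fun q hq _ => ⟨hdisj hq, (hdisj hq).symm⟩⟩

end UnitFlows

section Augmentation

variable {W : Type*} [DecidableEq W] {S F : Finset (W × W)} {s t w : W} {p q : List W}
  {Q : Finset (List W)}

lemma mem_flowArcs {e : W × W} : e ∈ flowArcs Q ↔ ∃ p ∈ Q, e ∈ pathArcs p := by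
  simp [flowArcs]

lemma IsNodeDisjointFamily.disjoint_pathArcs (hQ : IsNodeDisjointFamily S s t Q) (hp : p ∈ Q)
    (hq : q ∈ Q) (hpq : p ≠ q) : Disjoint (pathArcs p).toFinset (pathArcs q).toFinset := by
  rw [Finset.disjoint_left]
  intro e hep heq
  simp only [List.mem_toFinset] at hep heq
  have hp' := hQ.1 p hp
  have hq' := hQ.1 q hq
  obtain ⟨h₁p, h₁t⟩ := hp'.mem_dropLast_iff.mp (fst_mem_of_mem_pathArcs hep)
  obtain ⟨h₂p, h₂s⟩ := hp'.mem_tail_iff.mp (snd_mem_of_mem_pathArcs hep)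
  have h₁ : e.1 = s := (hQ.2 hp hq hpq e.1 h₁p
    (hq'.mem_dropLast_iff.mp (fst_mem_of_mem_pathArcs heq)).1).resolve_right h₁t
  have h₂ : e.2 = t := (hQ.2 hp hq hpq e.2 h₂p
    (hq'.mem_tail_iff.mp (snd_mem_of_mem_pathArcs heq)).1).resolve_left h₂s
  obtain ⟨a, b⟩ := e
  simp only at h₁ h₂
  subst h₁ h₂
  exact hpq ((hp'.eq_pair_of_mem_pathArcs hep).trans (hq'.eq_pair_of_mem_pathArcs heq).symm)

lemma IsNodeDisjointFamily.isUnitFlow_flowArcs (hQ : IsNodeDisjointFamily S s t Q)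
    (hst : s ≠ t) : IsUnitFlow (flowArcs Q) s t ∧ netOutflow (flowArcs Q) s = Q.card := by
  have hnet (w : W) : netOutflow (flowArcs Q) w = ∑ p ∈ Q, netOutflow (pathArcs p).toFinset w :=
    netOutflow_biUnion (fun p hp q hq hpq => hQ.disjoint_pathArcs hp hq hpq) w
  refine ⟨⟨Finset.eq_empty_of_forall_notMem fun e he => ?_, fun w hws hwt => ⟨?_, ?_⟩⟩, ?_⟩
  · obtain ⟨he, hes⟩ := mem_inArcs.mp he
    obtain ⟨p, hp, hep⟩ := mem_flowArcs.mp he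
    have : e ∈ inArcs (pathArcs p).toFinset s := by simp [hep, hes]
    simp [(hQ.1 p hp).isUnitFlow.1] at this
  · rw [hnet]
    exact Finset.sum_eq_zero fun p hp => ((hQ.1 p hp).isUnitFlow.2 w hws hwt).1
  · refine Finset.card_le_one.mpr fun e₁ he₁ e₂ he₂ => ?_
    obtain ⟨he₁F, rfl⟩ := mem_inArcs.mp he₁
    obtain ⟨he₂F, he₂w⟩ := mem_inArcs.mp he₂
    obtain ⟨p₁, hp₁, he₁⟩ := mem_flowArcs.mp he₁F
    obtain ⟨p₂, hp₂, he₂⟩ := mem_flowArcs.mp he₂F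
    obtain rfl : p₁ = p₂ := by
      by_contra hne
      have := hQ.2 hp₁ hp₂ hne e₁.2 (List.mem_of_mem_tail (snd_mem_of_mem_pathArcs he₁))
        (he₂w ▸ List.mem_of_mem_tail (snd_mem_of_mem_pathArcs he₂))
      tauto
    exact Finset.card_le_one.mp ((hQ.1 p₁ hp₁).isUnitFlow.2 _ hws hwt).2 e₁ (by simp [he₁])
      e₂ (by simp [he₂, he₂w])
  · rw [hnet, Finset.card_eq_sum_ones, Nat.cast_sum, Nat.cast_one]
    exact Finset.sum_congr rfl fun p hp => (hQ.1 p hp).netOutflow_start hst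

/-- Every internal node can carry at most one unit of flow; the split digraph is the example. -/
def HasUnitNodeCapacity (S : Finset (W × W)) (s t : W) : Prop :=
  ∀ w, w ≠ s → w ≠ t → (inArcs S w).card ≤ 1 ∨ (outArcs S w).card ≤ 1

lemma HasUnitNodeCapacity.card_inArcs_le_one (hS : HasUnitNodeCapacity S s t) (hFS : F ⊆ S)
    (hws : w ≠ s) (hwt : w ≠ t) (hF : netOutflow F w = 0) : (inArcs F w).card ≤ 1 := by
  have hin := Finset.card_le_card (inArcs_mono (w := w) hFS)
  have hout := Finset.card_le_card (outArcs_mono (w := w) hFS)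
  rw [netOutflow] at hF
  rcases hS w hws hwt with h | h <;> omega

theorem IsNodeDisjointFamily.exists_card_add_one (hS : HasUnitNodeCapacity S s t) (hst : s ≠ t)
    (hQ : IsNodeDisjointFamily S s t Q) {α : List W} (hα : IsPath (residualArcs S Q) s t α) :
    ∃ Q' : Finset (List W), Q'.card = Q.card + 1 ∧ IsNodeDisjointFamily S s t Q' := by
  set F := flowArcs Q
  set A := (pathArcs α).toFinset
  obtain ⟨hF, hFs⟩ := hQ.isUnitFlow_flowArcs hst
  have hA := hα.isUnitFlow
  have hFS : F ⊆ S := fun e he => by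
    obtain ⟨p, hp, hep⟩ := mem_flowArcs.mp he
    exact (hQ.1 p hp).mem_of_mem_pathArcs hep
  have hforward : A \ F.image Prod.swap ⊆ S \ F := fun e he => by
    obtain ⟨heA, heF⟩ := Finset.mem_sdiff.mp he
    rcases Finset.mem_union.mp (hα.mem_of_mem_pathArcs (List.mem_toFinset.mp heA)) with h | h
    · exact h
    · exact absurd h heF
  -- cancel the flow-arcs that `α` traverses backwards, add those it traverses forwards
  set F' := (F \ A.image Prod.swap) ∪ (A \ F.image Prod.swap)
  have hF'S : F' ⊆ S :=
    Finset.union_subset (Finset.sdiff_subset.trans hFS) (hforward.trans Finset.sdiff_subset)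
  have hnet := netOutflow_augment ((Finset.disjoint_sdiff.mono_right hforward).mono_left
    (Finset.sdiff_subset (t := A.image Prod.swap)))
  have hF' : IsUnitFlow F' s t := by
    refine ⟨Finset.eq_empty_of_forall_notMem fun e he => ?_, fun w hws hwt => ?_⟩
    · obtain ⟨he, hes⟩ := mem_inArcs.mp he
      rcases Finset.mem_union.mp he with h | h
      · exact Finset.notMem_empty e (hF.1 ▸ mem_inArcs.mpr ⟨(Finset.mem_sdiff.mp h).1, hes⟩)
      · exact Finset.notMem_empty e (hA.1 ▸ mem_inArcs.mpr ⟨(Finset.mem_sdiff.mp h).1, hes⟩)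
    have hw : netOutflow F' w = 0 := by
      rw [hnet, (hF.2 w hws hwt).1, (hA.2 w hws hwt).1, add_zero]
    exact ⟨hw, hS.card_inArcs_le_one hF'S hws hwt hw⟩
  obtain ⟨Q', hQ'card, hQ'⟩ := hF'.exists_isNodeDisjointFamily hst (Q.card + 1)
    (by rw [hnet, hFs, hα.netOutflow_start hst]; push_cast; rfl)
  exact ⟨Q', hQ'card, hQ'.mono hF'S⟩

end Augmentation

section SplitDigraph

variable {V : Type*}

def unsplitPath (β : List (V × Bool)) : List V := (β.filter (fun x => !x.2)).map Prod.fst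

lemma unsplitPath_append (β γ : List (V × Bool)) :
    unsplitPath (β ++ γ) = unsplitPath β ++ unsplitPath γ := by
  simp [unsplitPath]

lemma unsplitPath_cons_entry (v : V) (β : List (V × Bool)) :
    unsplitPath ((v, false) :: β) = v :: unsplitPath β := by
  simp [unsplitPath]

lemma unsplitPath_cons_exit (v : V) (β : List (V × Bool)) :
    unsplitPath ((v, true) :: β) = unsplitPath β := by
  simp [unsplitPath]

lemma nodup_unsplitPath {β : List (V × Bool)} (hβ : β.Nodup) : (unsplitPath β).Nodup :=
  (hβ.filter _).map_on fun x hx y hy hxy => Prod.ext hxy (by simp_all)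

variable [DecidableEq V] {s t u v : V} {p : List V}

lemma exitNode_fst : (exitNode s t v).1 = v := by
  unfold exitNode; split_ifs <;> rfl

lemma exitNode_eq_entry_iff : exitNode s t v = (u, false) ↔ v = u ∧ (v = s ∨ v = t) := by
  unfold exitNode; split_ifs with h <;> simp [h]

lemma splitPath_cons : splitPath s t (v :: p) =
    (if v = s ∨ v = t then [(v, false)] else [(v, false), (v, true)]) ++ splitPath s t p :=
  List.flatMap_cons

lemma splitPath_append (p q : List V) :
    splitPath s t (p ++ q) = splitPath s t p ++ splitPath s t q :=
  List.flatMap_append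

lemma mem_splitPath {x : V × Bool} :
    x ∈ splitPath s t p ↔ x.1 ∈ p ∧ (x.2 = true → ¬(x.1 = s ∨ x.1 = t)) := by
  obtain ⟨a, b⟩ := x
  simp only [splitPath, List.mem_flatMap]
  constructor
  · rintro ⟨w, hw, hx⟩
    split_ifs at hx with h <;> aesop
  · rintro ⟨ha, hb⟩
    refine ⟨a, ha, ?_⟩
    split_ifs with h <;> cases b <;> simp_all

lemma unsplitPath_splitPath (p : List V) : unsplitPath (splitPath s t p) = p := by
  induction p with
  | nil => rfl
  | cons v p ih =>
    rw [splitPath_cons, unsplitPath_append, ih]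
    split_ifs <;> simp [unsplitPath]

lemma nodup_splitPath_iff : (splitPath s t p).Nodup ↔ p.Nodup := by
  refine ⟨fun h => unsplitPath_splitPath (s := s) (t := t) p ▸ nodup_unsplitPath h, fun h => ?_⟩
  induction p with
  | nil => simp [splitPath]
  | cons v p ih =>
    obtain ⟨hv, hp⟩ := List.nodup_cons.mp h
    rw [splitPath_cons, List.nodup_append]
    refine ⟨by split_ifs <;> simp, ih hp, fun x hx y hy hxy => hv ?_⟩
    have hx : x.1 = v := by split_ifs at hx <;> aesop
    exact hx ▸ hxy ▸ (mem_splitPath.mp hy).1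

lemma splitPath_injective : Function.Injective (splitPath (V := V) s t) :=
  Function.LeftInverse.injective unsplitPath_splitPath

lemma head?_splitPath : (splitPath s t p).head? = p.head?.map (·, false) := by
  cases p with
  | nil => rfl
  | cons v p => rw [splitPath_cons]; split_ifs <;> simp

lemma getLast?_splitPath : (splitPath s t p).getLast? = p.getLast?.map (exitNode s t) := by
  induction p using List.reverseRecOn with
  | nil => rfl
  | append_singleton p v _ =>
    simp only [splitPath, List.flatMap_append, List.flatMap_singleton]
    split_ifs with h <;> simp [exitNode, h]

lemma intDisjoint_splitPath_iff {p q : List V} :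
    IntDisjoint (s, false) (t, false) (splitPath s t p) (splitPath s t q) ↔
      IntDisjoint s t p q := by
  constructor
  · intro h v hp hq
    simpa using h (v, false) (mem_splitPath.mpr ⟨hp, by simp⟩) (mem_splitPath.mpr ⟨hq, by simp⟩)
  · rintro h ⟨v, _ | _⟩ hp hq <;> rw [mem_splitPath] at hp hq
    · simpa using h v hp.1 hq.1
    · exact absurd (h v hp.1 hq.1) (hp.2 rfl)

variable [Fintype V] {E : Finset (V × V)} {x y : V × Bool}

lemma exists_of_exitNode_mem_splitArcs (h : (exitNode s t v, y) ∈ splitArcs E s t) :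
    ∃ w, y = (w, false) ∧ (v, w) ∈ E := by
  simp only [splitArcs, Finset.mem_union, Finset.mem_image, Finset.mem_filter, Finset.mem_univ,
    true_and, Prod.mk.injEq] at h
  rcases h with ⟨w, hw, hwv, -⟩ | ⟨⟨a, b⟩, hab, hav, rfl⟩
  · obtain ⟨rfl, hv⟩ := exitNode_eq_entry_iff.mp hwv.symm
    tauto
  · obtain rfl : a = v := by simpa [exitNode_fst] using congrArg Prod.fst hav
    exact ⟨b, rfl, hab⟩

lemma exitNode_mem_splitArcs_iff {w : V} :
    (exitNode s t v, (w, false)) ∈ splitArcs E s t ↔ (v, w) ∈ E := by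
  refine ⟨fun h => ?_, fun h => Finset.mem_union_right _ (Finset.mem_image_of_mem _ h)⟩
  obtain ⟨w', hw', hE⟩ := exists_of_exitNode_mem_splitArcs h
  rwa [(Prod.mk.inj hw').1]

lemma eq_of_entry_mem_splitArcs (hv : ¬(v = s ∨ v = t)) (h : ((v, false), y) ∈ splitArcs E s t) :
    y = (v, true) := by
  simp only [splitArcs, Finset.mem_union, Finset.mem_image, Finset.mem_filter, Finset.mem_univ,
    true_and, Prod.mk.injEq] at h
  rcases h with ⟨w, -, hwv, rfl⟩ | ⟨⟨a, b⟩, -, hav, -⟩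
  · rw [hwv.1]
  · exact absurd ((exitNode_eq_entry_iff.mp hav).1 ▸ (exitNode_eq_entry_iff.mp hav).2) hv

lemma eq_of_mem_splitArcs_exit (h : (x, (v, true)) ∈ splitArcs E s t) : x = (v, false) := by
  simp only [splitArcs, Finset.mem_union, Finset.mem_image, Finset.mem_filter, Finset.mem_univ,
    true_and, Prod.mk.injEq] at h
  rcases h with ⟨w, -, rfl, hw⟩ | ⟨⟨a, b⟩, -, -, h⟩
  · rw [hw.1]
  · simp at h

lemma splitArcs_hasUnitNodeCapacity :
    HasUnitNodeCapacity (splitArcs E s t) (s, false) (t, false) := by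
  rintro ⟨v, _ | _⟩ hs ht
  · right
    refine Finset.card_le_one.mpr fun ⟨x₁, y₁⟩ h₁ ⟨x₂, y₂⟩ h₂ => ?_
    obtain ⟨h₁, rfl : x₁ = (v, false)⟩ := mem_outArcs.mp h₁
    obtain ⟨h₂, rfl : x₂ = (v, false)⟩ := mem_outArcs.mp h₂
    have hv : ¬(v = s ∨ v = t) := by rintro (rfl | rfl) <;> simp_all
    rw [eq_of_entry_mem_splitArcs hv h₁, eq_of_entry_mem_splitArcs hv h₂]
  · left
    refine Finset.card_le_one.mpr fun ⟨x₁, y₁⟩ h₁ ⟨x₂, y₂⟩ h₂ => ?_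
    obtain ⟨h₁, rfl : y₁ = (v, true)⟩ := mem_inArcs.mp h₁
    obtain ⟨h₂, rfl : y₂ = (v, true)⟩ := mem_inArcs.mp h₂
    rw [eq_of_mem_splitArcs_exit h₁, eq_of_mem_splitArcs_exit h₂]

lemma isChain_splitPath_singleton (v : V) :
    (splitPath s t [v]).IsChain (fun x y => (x, y) ∈ splitArcs E s t) := by
  rw [splitPath_cons]
  split_ifs with hv
  · exact List.isChain_singleton _
  · refine List.isChain_pair.mpr (Finset.mem_union_left _ (Finset.mem_image_of_mem _ ?_))
    simpa [not_or] using hv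

lemma isChain_splitPath_iff : ∀ {p : List V},
    (splitPath s t p).IsChain (fun x y => (x, y) ∈ splitArcs E s t) ↔
      p.IsChain (fun u v => (u, v) ∈ E)
  | [] => by simp [splitPath]
  | [v] => by simpa using isChain_splitPath_singleton v
  | u :: w :: p => by
    rw [← List.singleton_append (l := w :: p), splitPath_append, List.isChain_append,
      isChain_splitPath_iff (p := w :: p), List.singleton_append, List.isChain_cons_cons]
    simp [getLast?_splitPath, head?_splitPath, exitNode_mem_splitArcs_iff,
      isChain_splitPath_singleton, and_comm]

lemma isPath_splitPath_iff :
    IsPath (splitArcs E s t) (s, false) (t, false) (splitPath s t p) ↔ IsPath E s t p := by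
  refine and_congr nodup_splitPath_iff (and_congr isChain_splitPath_iff (and_congr ?_ ?_))
  · simp [head?_splitPath]
  · simp [getLast?_splitPath, exitNode_eq_entry_iff]

/-- The only arc out of an internal entry node goes to the matching exit node, and arcs out of exit
nodes go to entry nodes, so the chain is a concatenation of blocks of `splitPath`. -/
lemma splitPath_unsplitPath_of_isChain : ∀ {u : V} {β : List (V × Bool)},
    ((u, false) :: β).IsChain (fun x y => (x, y) ∈ splitArcs E s t) →
    ((u, false) :: β).getLast? = some (t, false) →
    splitPath s t (unsplitPath ((u, false) :: β)) = (u, false) :: β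
  | u, [], _, hlast => by
    obtain rfl : u = t := by simpa using hlast
    simp [unsplitPath, splitPath]
  | u, y :: β, hch, hlast => by
    obtain ⟨huy, hch⟩ := List.isChain_cons_cons.mp hch
    rw [List.getLast?_cons_cons] at hlast
    by_cases hu : u = s ∨ u = t
    · have hexit : exitNode s t u = (u, false) := by simp [exitNode, hu]
      obtain ⟨w, rfl, -⟩ := exists_of_exitNode_mem_splitArcs (hexit ▸ huy)
      have ih := splitPath_unsplitPath_of_isChain hch hlast
      rw [unsplitPath_cons_entry, splitPath_cons, if_pos hu, ih, List.singleton_append]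
    · obtain rfl := eq_of_entry_mem_splitArcs hu huy
      obtain _ | ⟨z, β⟩ := β
      · simp at hlast
      obtain ⟨huz, hch⟩ := List.isChain_cons_cons.mp hch
      rw [List.getLast?_cons_cons] at hlast
      have hexit : exitNode s t u = (u, true) := by simp [exitNode, hu]
      obtain ⟨w, rfl, -⟩ := exists_of_exitNode_mem_splitArcs (hexit ▸ huz)
      have ih := splitPath_unsplitPath_of_isChain hch hlast
      rw [unsplitPath_cons_entry, unsplitPath_cons_exit, splitPath_cons, if_neg hu, ih]
      rfl

lemma IsPath.splitPath_unsplitPath {β : List (V × Bool)}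
    (hβ : IsPath (splitArcs E s t) (s, false) (t, false) β) :
    splitPath s t (unsplitPath β) = β := by
  obtain ⟨β, rfl⟩ := List.head?_eq_some_iff.mp hβ.2.2.1
  exact splitPath_unsplitPath_of_isChain hβ.2.1 hβ.2.2.2

lemma isNodeDisjointFamily_image_splitPath_iff {P : Finset (List V)} :
    IsNodeDisjointFamily (splitArcs E s t) (s, false) (t, false) (P.image (splitPath s t)) ↔
      IsNodeDisjointFamily E s t P := by
  rw [IsNodeDisjointFamily, IsNodeDisjointFamily, Finset.forall_mem_image, Finset.coe_image,
    splitPath_injective.injOn.pairwise_image]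
  simp only [isPath_splitPath_iff, Set.Pairwise, Function.onFun, intDisjoint_splitPath_iff]

lemma IsNodeDisjointFamily.image_unsplitPath {Q : Finset (List (V × Bool))}
    (hQ : IsNodeDisjointFamily (splitArcs E s t) (s, false) (t, false) Q) :
    (Q.image unsplitPath).card = Q.card ∧ IsNodeDisjointFamily E s t (Q.image unsplitPath) := by
  have hQ' : (Q.image unsplitPath).image (splitPath s t) = Q := by
    rw [Finset.image_image, Finset.image_congr (f := splitPath s t ∘ unsplitPath) (g := id)
      fun β hβ => (hQ.1 β hβ).splitPath_unsplitPath, Finset.image_id]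
  refine ⟨?_, isNodeDisjointFamily_image_splitPath_iff.mp (hQ'.symm ▸ hQ)⟩
  conv_rhs => rw [← hQ']
  exact (Finset.card_image_of_injective _ splitPath_injective).symm

end SplitDigraph

/-- If `P` is a set of `k` pairwise internally node-disjoint `s`–`t` paths of `G`, `P′`
the corresponding set of pairwise edge-disjoint paths in the split digraph `G′`, and the
residual digraph of `G′` with respect to `P′` contains a directed path from `s` to `t`,
then `G` has a set of `k + 1` pairwise internally node-disjoint `s`–`t` paths. -/
theorem split_augmenting_path_gives_larger_node_disjoint_family
    {V : Type*} [Fintype V] [DecidableEq V]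
    (E : Finset (V × V)) (s t : V) (hst : s ≠ t)
    (P : Finset (List V)) (k : ℕ) (hcard : P.card = k)
    (hP : IsNodeDisjointFamily E s t P)
    (haug : ∃ α : List (V × Bool),
      IsPath (residualArcs (splitArcs E s t) (P.image (splitPath s t)))
        (s, false) (t, false) α) :
    ∃ Q : Finset (List V), Q.card = k + 1 ∧ IsNodeDisjointFamily E s t Q := by
  obtain ⟨α, hα⟩ := haug
  obtain ⟨Q, hQcard, hQ⟩ := (isNodeDisjointFamily_image_splitPath_iff.mpr hP).exists_card_add_one
    splitArcs_hasUnitNodeCapacity (by simpa using hst) hα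
  obtain ⟨hcard', hQ'⟩ := hQ.image_unsplitPath
  refine ⟨Q.image unsplitPath, ?_, hQ'⟩
  rw [hcard', hQcard, Finset.card_image_of_injective _ splitPath_injective, hcard]
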